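/- Let H be a real RKHS on Ω with symmetric positive definite reproducing kernel R and L : H → ℝ a continuous linear functional with L_xL_yR ≠ 0. Then R₀(x,y) = R(x,y) − (L_xR(x,y)·L_yR(x,y))/(L_xL_yR) is a symmetric positive semidefinite kernel on Ω (it is the reproducing kernel of the closed subspace H₀ = ker L). -/
import Mathlib


open scoped RealInnerProductSpace

/-- `H` a real RKHS with (symmetric positive definite)
reproducing kernel `R`, `L` a continuous linear functional (Riesz
representer `g`) with `L_xL_yR = L g ≠ 0`. Then
`R₀(x,y) = R(x,y) − L_xR(x,y)·L_yR(x,y)/(L_xL_yR)` is a symmetric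
positive semidefinite kernel on `Ω`. -/
theorem stmt6 {Ω : Type*} {H : Type*} [NormedAddCommGroup H]
    [InnerProductSpace ℝ H] [CompleteSpace H]
    (k : Ω → H) (R : Ω → Ω → ℝ) (hR : R = fun x y => ⟪k x, k y⟫)
    (L : H →L[ℝ] ℝ) (g : H) (hg : ∀ u : H, L u = ⟪g, u⟫)
    (hLg : L g ≠ 0)
    (R₀ : Ω → Ω → ℝ)
    (hR₀ : R₀ = fun x y => R x y - (L (k y)) * ⟪k x, g⟫ / L g) :
    (∀ x y, R₀ x y = R₀ y x) ∧
      ∀ (n : ℕ) (z : Fin n → Ω) (c : Fin n → ℝ),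
        0 ≤ ∑ i, ∑ j, c i * c j * R₀ (z i) (z j) := by
  have hLgg : L g = ⟪g, g⟫ := hg g
  have hgg : (0:ℝ) < ⟪g, g⟫ := by
    rcases lt_or_eq_of_le (real_inner_self_nonneg (x := g)) with h | h
    · exact h
    · exact absurd (hLgg.trans h.symm) hLg
  subst hR hR₀
  constructor
  · intro x y
    simp only [hg]
    rw [real_inner_comm (k x) (k y), real_inner_comm (k y) g,
      real_inner_comm (k x) g]
    ring
  · intro n z c
    set v := ∑ i, c i • k (z i) with hv
    have key : ∑ i, ∑ j, c i * c j *
        (⟪k (z i), k (z j)⟫ - (L (k (z j))) * ⟪k (z i), g⟫ / L g)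
        = ⟪v, v⟫ - ⟪g, v⟫ ^ 2 / ⟪g, g⟫ := by
      have h1 : ⟪v, v⟫ = ∑ i, ∑ j, c i * c j * ⟪k (z i), k (z j)⟫ := by
        simp only [hv, inner_sum, sum_inner, inner_smul_left, inner_smul_right,
          RCLike.conj_to_real, Finset.mul_sum]
        refine Finset.sum_congr rfl fun i _ => Finset.sum_congr rfl fun j _ => ?_
        rw [real_inner_comm (k (z j)) (k (z i))]
        ring
      have h2 : ⟪g, v⟫ = ∑ j, c j * ⟪g, k (z j)⟫ := by
        simp [hv, inner_sum, inner_smul_right]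
      have h3 : ⟪v, g⟫ = ∑ i, c i * ⟪k (z i), g⟫ := by
        simp [hv, sum_inner, inner_smul_left]
      have h4 : ⟪v, g⟫ = ⟪g, v⟫ := real_inner_comm g v
      rw [h1, hLgg, div_eq_mul_inv,
        show (⟪g, v⟫:ℝ) ^ 2 = ⟪v, g⟫ * ⟪g, v⟫ by rw [h4]; ring,
        h2, h3, Finset.sum_mul_sum, Finset.sum_mul, ← Finset.sum_sub_distrib]
      refine Finset.sum_congr rfl fun i _ => ?_
      rw [Finset.sum_mul, ← Finset.sum_sub_distrib]
      refine Finset.sum_congr rfl fun j _ => ?_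
      rw [hg (k (z j)), div_eq_mul_inv]
      ring
    rw [key]
    have hcs : ⟪g, v⟫ * ⟪g, v⟫ ≤ ⟪g, g⟫ * ⟪v, v⟫ := real_inner_mul_inner_self_le g v
    have : ⟪g, v⟫ ^ 2 / ⟪g, g⟫ ≤ ⟪v, v⟫ := by
      rw [div_le_iff₀ hgg]; nlinarith
    linarith
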